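/- Define S_m = D_{m+1} − D_m. Then for every j ≥ 0 one has 0 ≤ S_j ≤ p−2; moreover, every value in {0, 1, …, p−2} is attained by the sequence (S_j)_{j≥0}. -/

import Mathlib

/-!
For `x ∈ Γ*` the value `φ^(m)(x)` depends only on finitely many digits of `x`, every cylinder has
positive `λ`-measure, and the digit sequence of every point of `[0,1)` lies in `Γ*`. Hence the
support of `π_m` is exactly `φ^(m)(Γ*)` and `D_m` is the maximum of `φ^(m)` on `Γ*`. Since
`φ^(m+1) = φ^(m) + φ ∘ S^m` and `0 ≤ φ ≤ p - 2` on `Γ*`, we get `0 ≤ S_m ≤ p - 2`.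

For `1 ≤ m ≤ p` the leading digits `x_0 + j mod p` of `S^j x`, `j < m`, are distinct and
`φ(S^j x) ≤ min (x_0 + j mod p) (p - 2)`, so `D_m ≤ ∑_{i<m} min (p-1-i) (p-2)`, with equality at
`x = (p - m, p - 2, 0, 0, …)`. Thus `S_m = p - 1 - m` for `1 ≤ m ≤ p - 1`.
-/

open MeasureTheory
open scoped NNReal ENNReal

namespace Chacon

/-- The space of digit sequences with digits in `{0, …, p-1}`. -/
def Gamma (p : ℕ) : Set (ℕ → ℕ) := {x | ∀ i, x i < p}

/-- `Γ*`: sequences with digits `< p` having infinitely many coordinates `≠ p - 1`. -/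
def GammaStar (p : ℕ) : Set (ℕ → ℕ) :=
  {x | (∀ i, x i < p) ∧ {i | x i ≠ p - 1}.Infinite}

/-- The least index `i` with `x i ≠ p - 1`. -/
noncomputable def firstNot (p : ℕ) (x : ℕ → ℕ) : ℕ :=
  sInf {i | x i ≠ p - 1}

/-- `φ(x) = x_i` where `i` is the least index with `x_i ≠ p - 1`. -/
noncomputable def phi (p : ℕ) (x : ℕ → ℕ) : ℕ :=
  x (firstNot p x)

/-- The odometer `S` (addition of `1` with carry): the initial run of digits
`p - 1` is replaced by zeros, and the first digit `≠ p - 1` is increased by one. -/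
noncomputable def odo (p : ℕ) (x : ℕ → ℕ) : ℕ → ℕ :=
  fun i =>
    if i < firstNot p x then 0
    else if i = firstNot p x then x i + 1
    else x i

/-- `φ^(m)(x) = ∑_{j=0}^{m-1} φ(S^j x)`. -/
noncomputable def phiSum (p m : ℕ) (x : ℕ → ℕ) : ℕ :=
  ∑ j ∈ Finset.range m, phi p ((odo p)^[j] x)

/-- The base-`p` digit sequence of a real number `u`. -/
noncomputable def digitsOf (p : ℕ) (u : ℝ) : ℕ → ℕ :=
  fun i => (⌊u * (p : ℝ) ^ (i + 1)⌋).toNat % p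

/-- `λ`: the product probability measure on digit sequences under which the
coordinates are i.i.d., uniformly distributed in `{0, …, p-1}`; it is realized
concretely as the distribution of the base-`p` digit sequence of a uniformly
distributed random point of `[0,1)`. -/
noncomputable def lam (p : ℕ) : Measure (ℕ → ℕ) :=
  Measure.map (digitsOf p) (volume.restrict (Set.Ico (0 : ℝ) 1))

/-- `π_m(j) = λ({x : φ^(m)(x) = j})`. -/
noncomputable def pim (p m j : ℕ) : ℝ≥0∞ :=
  lam p {x | phiSum p m x = j}

/-- `P_m^p(t) = ∑_{j ≥ 0} π_m(j) t^j`, a real polynomial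
(the sum is over `0 ≤ j ≤ m (p-2)` since `0 ≤ φ^(m) ≤ m (p-2)` a.s.). -/
noncomputable def P (p m : ℕ) (t : ℝ) : ℝ :=
  ∑ j ∈ Finset.range (m * (p - 2) + 1), (pim p m j).toReal * t ^ j

/-- The `n`-th triangular number `Δ_n = n (n+1) / 2`. -/
def tri (n : ℕ) : ℕ := n * (n + 1) / 2

/-- The degree `D_m` of `P_m^p`: the largest `j` with `π_m(j) ≠ 0`. -/
noncomputable def D (p m : ℕ) : ℕ := sSup {j | pim p m j ≠ 0}

/-- The lower degree `d_m` of `P_m^p`: the least `j` with `π_m(j) ≠ 0`. -/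
noncomputable def d (p m : ℕ) : ℕ := sInf {j | pim p m j ≠ 0}

open Finset

theorem _root_.Finset.sum_le_sum_range_sub_of_monotone {M : Type*} [AddCommMonoid M]
    [PartialOrder M] [IsOrderedAddMonoid M] {f : ℕ → M} (hf : Monotone f) {N : ℕ} {s : Finset ℕ}
    (hs : s ⊆ range N) : ∑ i ∈ s, f i ≤ ∑ i ∈ range #s, f (N - 1 - i) := by
  induction N generalizing s with
  | zero => simp [subset_empty.mp hs]
  | succ N ih =>
    by_cases hN : N ∈ s
    · have herase : s.erase N ⊆ range N := fun i hi => by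
        have := mem_range.mp (hs (mem_of_mem_erase hi))
        exact mem_range.mpr (by have := ne_of_mem_erase hi; omega)
      obtain ⟨k, hk⟩ : ∃ k, #s = k + 1 := ⟨#s - 1, by have := card_pos.mpr ⟨N, hN⟩; omega⟩
      have hrest := ih herase
      rw [card_erase_of_mem hN, hk, Nat.add_sub_cancel] at hrest
      rw [← add_sum_erase s f hN, hk, sum_range_succ', add_comm, Nat.add_sub_cancel, Nat.sub_zero]
      gcongr
      exact hrest.trans_eq (sum_congr rfl fun i _ => by rw [Nat.sub_sub, Nat.add_comm 1])
    · have hs' : s ⊆ range N := fun i hi => by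
        have := mem_range.mp (hs hi)
        exact mem_range.mpr (by have : i ≠ N := fun h => hN (h ▸ hi); omega)
      exact (ih hs').trans (sum_le_sum fun i _ => hf (by omega))

variable {p m : ℕ} {x y : ℕ → ℕ}

lemma firstNot_ne (hx : x ∈ GammaStar p) : x (firstNot p x) ≠ p - 1 :=
  Nat.sInf_mem hx.2.nonempty

lemma eq_of_lt_firstNot {i : ℕ} (hi : i < firstNot p x) : x i = p - 1 :=
  not_not.mp (Nat.notMem_of_lt_sInf hi)

lemma firstNot_eq {k : ℕ} (hk : x k ≠ p - 1) (hlt : ∀ i < k, x i = p - 1) :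
    firstNot p x = k :=
  le_antisymm (Nat.sInf_le hk) (le_csInf ⟨k, hk⟩ fun i hi => not_lt.mp fun h => hi (hlt i h))

lemma firstNot_eq_zero (h : x 0 ≠ p - 1) : firstNot p x = 0 :=
  firstNot_eq h fun _ h => absurd h (Nat.not_lt_zero _)

lemma firstNot_congr (hx : x ∈ GammaStar p) (h : ∀ i ≤ firstNot p x, y i = x i) :
    firstNot p y = firstNot p x :=
  firstNot_eq (by rw [h _ le_rfl]; exact firstNot_ne hx)
    fun i hi => by rw [h i hi.le]; exact eq_of_lt_firstNot hi

lemma phi_le (hx : x ∈ GammaStar p) : phi p x ≤ p - 2 := by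
  have hlt := hx.1 (firstNot p x)
  have hne := firstNot_ne hx
  unfold phi
  omega

lemma phi_eq_of_ne (h : x 0 ≠ p - 1) : phi p x = x 0 := by
  rw [phi, firstNot_eq_zero h]

lemma phi_le_min (hx : x ∈ GammaStar p) : phi p x ≤ min (x 0) (p - 2) := by
  by_cases h : x 0 = p - 1
  · exact (phi_le hx).trans (le_min (by omega) le_rfl)
  · have := hx.1 0; rw [phi_eq_of_ne h]; omega

lemma odo_of_ne (h : x 0 ≠ p - 1) (i : ℕ) : odo p x i = if i = 0 then x 0 + 1 else x i := by
  simp only [odo, firstNot_eq_zero h, Nat.not_lt_zero, if_false]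
  split_ifs with hi <;> simp [hi]

lemma mapsTo_odo : Set.MapsTo (odo p) (GammaStar p) (GammaStar p) := by
  intro x hx
  refine ⟨fun i => ?_, (hx.2.sdiff (Set.finite_Iic (firstNot p x))).mono fun i hi => ?_⟩
  · have := hx.1 i; have := hx.1 (firstNot p x); have := firstNot_ne hx
    simp only [odo]; split_ifs with h1 h2 <;> [omega; (subst h2; omega); omega]
  · obtain ⟨hi, hif⟩ := hi
    simp only [Set.mem_Iic, not_le] at hif
    simpa [odo, hif.not_gt, hif.ne'] using hi

lemma odo_zero (hx : x ∈ GammaStar p) : odo p x 0 = (x 0 + 1) % p := by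
  have h0 := hx.1 0
  by_cases h : x 0 = p - 1
  · have hpos : 0 < firstNot p x :=
      Nat.pos_of_ne_zero fun hf => firstNot_ne hx (hf ▸ h)
    rw [odo, if_pos hpos, h, Nat.sub_add_cancel (by omega), Nat.mod_self]
  · rw [odo_of_ne h, if_pos rfl, Nat.mod_eq_of_lt (by omega)]

lemma iterate_odo_zero (hx : x ∈ GammaStar p) (j : ℕ) : (odo p)^[j] x 0 = (x 0 + j) % p := by
  induction j with
  | zero => exact (Nat.mod_eq_of_lt (hx.1 0)).symm
  | succ j ih =>
    rw [Function.iterate_succ_apply', odo_zero (mapsTo_odo.iterate j hx), ih, Nat.mod_add_mod,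
      add_assoc]

lemma phiSum_succ (p m : ℕ) (x : ℕ → ℕ) :
    phiSum p (m + 1) x = phiSum p m x + phi p ((odo p)^[m] x) :=
  sum_range_succ _ m

lemma phiSum_succ' (p m : ℕ) (x : ℕ → ℕ) :
    phiSum p (m + 1) x = phi p x + phiSum p m (odo p x) :=
  (sum_range_succ' _ m).trans (add_comm _ _)

lemma phiSum_le (hx : x ∈ GammaStar p) : phiSum p m x ≤ m * (p - 2) :=
  (sum_le_card_nsmul _ _ _ fun j _ => phi_le (mapsTo_odo.iterate j hx)).trans_eq (by simp)

lemma exists_phiSum_eq_of_forall_le_eq (hx : x ∈ GammaStar p) (m : ℕ) :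
    ∃ K, ∀ y, (∀ i ≤ K, y i = x i) → phiSum p m y = phiSum p m x := by
  induction m generalizing x with
  | zero => exact ⟨0, fun _ _ => rfl⟩
  | succ m ih =>
    obtain ⟨K, hK⟩ := ih (mapsTo_odo hx)
    refine ⟨max K (firstNot p x), fun y hy => ?_⟩
    have hf : firstNot p y = firstNot p x :=
      firstNot_congr hx fun i hi => hy i (le_max_of_le_right hi)
    have hodo : ∀ i ≤ K, odo p y i = odo p x i := fun i hi => by
      simp only [odo, hf, hy i (le_max_of_le_left hi)]
    rw [phiSum_succ', phiSum_succ', phi, phi, hf, hy _ (le_max_right _ _), hK _ hodo]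

lemma injOn_add_mod (a : ℕ) (hm : m ≤ p) :
    Set.InjOn (fun j => (a + j) % p) (range m : Set ℕ) := fun i hi j hj hij => by
  have h : i % p = j % p := Nat.ModEq.add_left_cancel' a hij
  rwa [Nat.mod_eq_of_lt ((mem_range.mp hi).trans_le hm),
    Nat.mod_eq_of_lt ((mem_range.mp hj).trans_le hm)] at h

lemma phiSum_le_sum_min (hx : x ∈ GammaStar p) (hm : m ≤ p) :
    phiSum p m x ≤ ∑ i ∈ range m, min (p - 1 - i) (p - 2) := by
  have hp : 0 < p := (Nat.zero_le _).trans_lt (hx.1 0)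
  set s := (range m).image fun j => (x 0 + j) % p
  have hcard : #s = m := by rw [card_image_of_injOn (injOn_add_mod _ hm), card_range]
  calc phiSum p m x ≤ ∑ j ∈ range m, min ((x 0 + j) % p) (p - 2) := sum_le_sum fun j _ =>
        (phi_le_min (mapsTo_odo.iterate j hx)).trans_eq (by rw [iterate_odo_zero hx])
    _ = ∑ r ∈ s, min r (p - 2) :=
        (sum_image (f := fun r => min r (p - 2)) (injOn_add_mod (x 0) hm)).symm
    _ ≤ ∑ i ∈ range #s, min (p - 1 - i) (p - 2) :=
        sum_le_sum_range_sub_of_monotone (fun _ _ h => min_le_min_right _ h)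
          (image_subset_iff.mpr fun _ _ => mem_range.mpr (Nat.mod_lt _ hp))
    _ = _ := by rw [hcard]

lemma exists_phiSum_eq_sum_min (hp : 2 ≤ p) (hm0 : 0 < m) (hm : m ≤ p) :
    ∃ x ∈ GammaStar p, phiSum p m x = ∑ i ∈ range m, min (p - 1 - i) (p - 2) := by
  set x : ℕ → ℕ := fun i => if i = 0 then p - m else if i = 1 then p - 2 else 0
  have hx : x ∈ GammaStar p := by
    refine ⟨fun i => ?_, (Set.Ioi_infinite 1).mono fun i hi => ?_⟩
    · simp only [x]; split_ifs <;> omega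
    · simp only [Set.mem_Ioi] at hi
      show x i ≠ p - 1
      simp only [x, if_neg (show i ≠ 0 by omega), if_neg hi.ne']
      omega
  have horbit : ∀ j < m, ∀ i, (odo p)^[j] x i = if i = 0 then p - m + j else x i := by
    intro j hj
    induction j with
    | zero => intro i; split_ifs with h <;> simp [x, h]
    | succ j ih =>
      intro i
      have hne : (odo p)^[j] x 0 ≠ p - 1 := by rw [ih (by omega), if_pos rfl]; omega
      rw [Function.iterate_succ_apply', odo_of_ne hne, ih (by omega), ih (by omega), if_pos rfl]
      split_ifs <;> omega
  have hphi : ∀ j < m, phi p ((odo p)^[j] x) = min (p - m + j) (p - 2) := by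
    intro j hj
    rcases Nat.lt_or_ge (j + 1) m with hlt | hge
    · rw [phi_eq_of_ne (by rw [horbit j hj, if_pos rfl]; omega), horbit j hj, if_pos rfl]
      omega
    · have hfirst : firstNot p ((odo p)^[j] x) = 1 :=
        firstNot_eq (by rw [horbit j hj, if_neg one_ne_zero]; show p - 2 ≠ p - 1; omega)
          fun i hi => by rw [horbit j hj, if_pos (by omega)]; omega
      rw [phi, hfirst, horbit j hj, if_neg one_ne_zero]
      show p - 2 = _
      omega
  refine ⟨x, hx, ?_⟩
  rw [phiSum, sum_congr rfl fun j hj => hphi j (mem_range.mp hj),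
    ← sum_range_reflect (fun i => min (p - 1 - i) (p - 2))]
  exact sum_congr rfl fun j hj => by have := mem_range.mp hj; congr 1; omega

lemma firstNot_eq_iff {k : ℕ} : firstNot p x = k ↔
    (x k ≠ p - 1 ∧ ∀ i < k, x i = p - 1) ∨ (k = 0 ∧ ∀ i, x i = p - 1) := by
  constructor
  · rintro rfl
    by_cases h : ∃ i, x i ≠ p - 1
    · exact Or.inl ⟨Nat.sInf_mem h, fun i hi => eq_of_lt_firstNot hi⟩
    · simp only [not_exists, not_not] at h
      refine Or.inr ⟨?_, h⟩
      simp [firstNot, h]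
  · rintro (⟨hk, hlt⟩ | ⟨rfl, h⟩)
    · exact firstNot_eq hk hlt
    · simp [firstNot, h]

lemma measurable_firstNot (p : ℕ) : Measurable (firstNot p) :=
  measurable_to_countable' fun k => by
    simp only [Set.preimage, Set.mem_singleton_iff, firstNot_eq_iff]
    measurability

lemma measurable_comp_firstNot {β : Type*} [MeasurableSpace β] {g : ℕ → (ℕ → ℕ) → β}
    (hg : ∀ k, Measurable (g k)) : Measurable fun x => g (firstNot p x) x :=
  (measurable_from_prod_countable_left (f := fun q : (ℕ → ℕ) × ℕ => g q.2 q.1) hg).comp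
    (measurable_id.prodMk (measurable_firstNot p))

lemma measurable_phiSum (p m : ℕ) : Measurable (phiSum p m) := by
  have hphi : Measurable (phi p) := measurable_comp_firstNot measurable_pi_apply
  have hodo : Measurable (odo p) := measurable_pi_lambda _ fun i =>
    measurable_comp_firstNot (g := fun k x => if i < k then 0 else if i = k then x i + 1 else x i)
      fun k => by split_ifs <;> fun_prop
  exact Finset.measurable_sum _ fun j _ => hphi.comp (hodo.iterate j)

lemma measurable_digitsOf (p : ℕ) : Measurable (digitsOf p) :=
  measurable_pi_lambda _ fun _ =>
    (measurable_from_top : Measurable fun z : ℤ => z.toNat % p).comp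
      (Int.measurable_floor.comp (measurable_id.mul_const _))

lemma pim_eq_volume (p m j : ℕ) :
    pim p m j = volume (digitsOf p ⁻¹' {x | phiSum p m x = j} ∩ Set.Ico 0 1) := by
  have hs : MeasurableSet {x | phiSum p m x = j} :=
    measurable_phiSum p m (measurableSet_singleton j)
  rw [pim, lam, Measure.map_apply (measurable_digitsOf p) hs,
    Measure.restrict_apply (measurable_digitsOf p hs)]

lemma digitsOf_eq (p : ℕ) (u : ℝ) (i : ℕ) : digitsOf p u i = ⌊u * (p : ℝ) ^ (i + 1)⌋₊ % p := by
  rw [digitsOf, Int.floor_toNat]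

lemma floor_mul_pow_add_div (hp : 0 < p) (u : ℝ) (i k : ℕ) :
    ⌊u * (p : ℝ) ^ (i + k + 1)⌋₊ / p ^ k = ⌊u * (p : ℝ) ^ (i + 1)⌋₊ := by
  rw [← Nat.floor_div_natCast]
  congr 1
  have : (p : ℝ) ≠ 0 := by positivity
  push_cast
  field_simp
  ring

lemma digitsOf_mem_GammaStar (hp : 2 ≤ p) {u : ℝ} (hu : 0 ≤ u) :
    digitsOf p u ∈ GammaStar p := by
  refine ⟨fun i => Nat.mod_lt _ (by omega), fun hfin => ?_⟩
  set n : ℕ → ℕ := fun i => ⌊u * (p : ℝ) ^ (i + 1)⌋₊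
  have hrec : ∀ i, n (i + 1) = p * n i + digitsOf p u (i + 1) := fun i => by
    simp only [n, digitsOf_eq]
    rw [← floor_mul_pow_add_div (by omega) u i 1, pow_one, Nat.div_add_mod]
  obtain ⟨N, hN⟩ := hfin.bddAbove
  have hgrow : ∀ k, n (N + k) + 1 = p ^ k * (n N + 1) := by
    intro k
    induction k with
    | zero => simp
    | succ k ih =>
      have hdig : digitsOf p u (N + k + 1) = p - 1 :=
        not_not.mp fun h => absurd (hN h) (by omega)
      rw [← add_assoc, hrec, hdig, pow_succ', mul_assoc, ← ih]
      have : 1 ≤ p := by omega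
      zify [this]
      ring
  -- A tail of digits `p - 1` multiplies the gap `n N + 1 - u * p ^ (N + 1) > 0` by `p` at each
  -- step, while the gap can never exceed `1`.
  have hp1 : (1 : ℝ) < p := by exact_mod_cast hp
  have hδ : 0 < (n N : ℝ) + 1 - u * (p : ℝ) ^ (N + 1) := by
    have := Nat.lt_floor_add_one (u * (p : ℝ) ^ (N + 1))
    simp only [n]
    linarith
  obtain ⟨k, hk⟩ := pow_unbounded_of_one_lt (1 / ((n N : ℝ) + 1 - u * (p : ℝ) ^ (N + 1))) hp1
  rw [div_lt_iff₀ hδ] at hk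
  have hfloor : (n (N + k) : ℝ) ≤ u * (p : ℝ) ^ (N + k + 1) := Nat.floor_le (by positivity)
  have hgrowR : (n (N + k) : ℝ) + 1 = (p : ℝ) ^ k * ((n N : ℝ) + 1) := by exact_mod_cast hgrow k
  have hpow : (p : ℝ) ^ (N + k + 1) = (p : ℝ) ^ k * (p : ℝ) ^ (N + 1) := by ring
  nlinarith

def prefixNumeral (p : ℕ) (x : ℕ → ℕ) : ℕ → ℕ
  | 0 => x 0
  | k + 1 => p * prefixNumeral p x k + x (k + 1)

lemma prefixNumeral_add_div_pow (hx : ∀ i, x i < p) (k j : ℕ) :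
    prefixNumeral p x (k + j) / p ^ j = prefixNumeral p x k := by
  induction j with
  | zero => simp
  | succ j ih =>
    have hp : 0 < p := (Nat.zero_le _).trans_lt (hx 0)
    rw [← add_assoc, prefixNumeral, pow_succ', ← Nat.div_div_eq_div_mul,
      Nat.mul_add_div hp, Nat.div_eq_of_lt (hx _), add_zero, ih]

lemma prefixNumeral_mod (hx : ∀ i, x i < p) (k : ℕ) : prefixNumeral p x k % p = x k := by
  cases k with
  | zero => exact Nat.mod_eq_of_lt (hx 0)
  | succ k => rw [prefixNumeral, Nat.mul_add_mod, Nat.mod_eq_of_lt (hx _)]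

lemma prefixNumeral_lt (hx : ∀ i, x i < p) (k : ℕ) : prefixNumeral p x k < p ^ (k + 1) := by
  induction k with
  | zero => simpa [prefixNumeral] using hx 0
  | succ k ih =>
    have := hx (k + 1)
    calc p * prefixNumeral p x k + x (k + 1) < p * (prefixNumeral p x k + 1) := by linarith
      _ ≤ p * p ^ (k + 1) := Nat.mul_le_mul_left _ ih
      _ = p ^ (k + 1 + 1) := (pow_succ' _ _).symm

lemma digitsOf_eq_of_floor (hx : ∀ i, x i < p) {K : ℕ} {u : ℝ}
    (hu : ⌊u * (p : ℝ) ^ (K + 1)⌋₊ = prefixNumeral p x K) {i : ℕ} (hi : i ≤ K) :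
    digitsOf p u i = x i := by
  obtain ⟨k, rfl⟩ := Nat.exists_eq_add_of_le hi
  rw [digitsOf_eq, ← floor_mul_pow_add_div ((Nat.zero_le _).trans_lt (hx 0)) u i k, hu,
    prefixNumeral_add_div_pow hx, prefixNumeral_mod hx]

lemma volume_cylinder_ne_zero (hx : ∀ i, x i < p) (K : ℕ) :
    volume (digitsOf p ⁻¹' {y | ∀ i ≤ K, y i = x i} ∩ Set.Ico 0 1) ≠ 0 := by
  set r := prefixNumeral p x K
  set N : ℝ := (p : ℝ) ^ (K + 1)
  have hN : 0 < N := pow_pos (by exact_mod_cast (Nat.zero_le _).trans_lt (hx 0)) _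
  have hrN : (r : ℝ) + 1 ≤ N := by
    have : r + 1 ≤ p ^ (K + 1) := prefixNumeral_lt hx K
    simp only [N]
    exact_mod_cast this
  have hsub : Set.Ico (r / N) ((r + 1) / N) ⊆
      digitsOf p ⁻¹' {y | ∀ i ≤ K, y i = x i} ∩ Set.Ico 0 1 := by
    rintro u ⟨hu1, hu2⟩
    rw [div_le_iff₀ hN] at hu1
    rw [lt_div_iff₀ hN] at hu2
    have hu0 : 0 ≤ u := by nlinarith [(Nat.cast_nonneg r : (0 : ℝ) ≤ r)]
    have hfloor : ⌊u * N⌋₊ = r := (Nat.floor_eq_iff (by positivity)).mpr ⟨by linarith, by linarith⟩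
    exact ⟨fun i hi => digitsOf_eq_of_floor hx hfloor hi, hu0, by nlinarith⟩
  intro h
  have hI := measure_mono_null hsub h
  rw [Real.volume_Ico, ENNReal.ofReal_eq_zero, ← sub_div, add_sub_cancel_left] at hI
  exact hI.not_gt (by positivity)

lemma pim_ne_zero_iff (hp : 2 ≤ p) {j : ℕ} : pim p m j ≠ 0 ↔ j ∈ phiSum p m '' GammaStar p := by
  rw [pim_eq_volume]
  constructor
  · intro h
    obtain ⟨u, hu, hu01⟩ := nonempty_of_measure_ne_zero h
    exact ⟨digitsOf p u, digitsOf_mem_GammaStar hp hu01.1, hu⟩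
  · rintro ⟨x, hx, rfl⟩
    obtain ⟨K, hK⟩ := exists_phiSum_eq_of_forall_le_eq hx m
    refine fun h => volume_cylinder_ne_zero hx.1 K (measure_mono_null ?_ h)
    exact Set.inter_subset_inter_left _ fun u hu => hK _ hu

lemma isGreatest_D (hp : 2 ≤ p) (m : ℕ) : IsGreatest (phiSum p m '' GammaStar p) (D p m) := by
  have hsupp : {j | pim p m j ≠ 0} = phiSum p m '' GammaStar p :=
    Set.ext fun _ => pim_ne_zero_iff hp
  have hzero : (fun _ => 0 : ℕ → ℕ) ∈ GammaStar p :=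
    ⟨fun _ => show 0 < p by omega, Set.infinite_univ.mono fun _ _ => show 0 ≠ p - 1 by omega⟩
  have hbdd : BddAbove (phiSum p m '' GammaStar p) :=
    ⟨m * (p - 2), Set.forall_mem_image.mpr fun _ hx => phiSum_le hx⟩
  rw [D, hsupp]
  exact ⟨Nat.sSup_mem ⟨_, Set.mem_image_of_mem _ hzero⟩ hbdd, fun _ hj => le_csSup hbdd hj⟩

lemma D_le_D_succ (hp : 2 ≤ p) (m : ℕ) : D p m ≤ D p (m + 1) := by
  obtain ⟨x, hx, hxD⟩ := (isGreatest_D hp m).1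
  calc D p m = phiSum p m x := hxD.symm
    _ ≤ phiSum p (m + 1) x := by rw [phiSum_succ]; exact Nat.le_add_right _ _
    _ ≤ D p (m + 1) := (isGreatest_D hp (m + 1)).2 ⟨x, hx, rfl⟩

lemma D_succ_le (hp : 2 ≤ p) (m : ℕ) : D p (m + 1) ≤ D p m + (p - 2) := by
  obtain ⟨x, hx, hxD⟩ := (isGreatest_D hp (m + 1)).1
  rw [← hxD, phiSum_succ]
  exact add_le_add ((isGreatest_D hp m).2 ⟨x, hx, rfl⟩) (phi_le (mapsTo_odo.iterate m hx))

lemma D_eq_sum_min (hp : 2 ≤ p) {m : ℕ} (hm0 : 0 < m) (hm : m ≤ p) :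
    D p m = ∑ i ∈ range m, min (p - 1 - i) (p - 2) := by
  obtain ⟨x, hx, hxD⟩ := (isGreatest_D hp m).1
  obtain ⟨y, hy, hyS⟩ := exists_phiSum_eq_sum_min hp hm0 hm
  exact le_antisymm (hxD ▸ phiSum_le_sum_min hx hm) (hyS ▸ (isGreatest_D hp m).2 ⟨y, hy, rfl⟩)

/-- with `S_j = D_{j+1} - D_j`, one has `0 ≤ S_j ≤ p - 2` for all `j`
(in particular `D` is nondecreasing), and every value of `{0, 1, …, p-2}` is
attained by the sequence `(S_j)`. -/
theorem statement_12 (p : ℕ) (hp : 3 ≤ p) :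
    (∀ j : ℕ, D p j ≤ D p (j + 1) ∧ D p (j + 1) - D p j ≤ p - 2) ∧
    (∀ v : ℕ, v ≤ p - 2 → ∃ j : ℕ, D p (j + 1) - D p j = v) := by
  have hp2 : 2 ≤ p := by omega
  refine ⟨fun j => ⟨D_le_D_succ hp2 j, ?_⟩, fun v hv => ⟨p - 1 - v, ?_⟩⟩
  · have := D_succ_le hp2 j
    omega
  · rw [D_eq_sum_min hp2 (by omega) (by omega), D_eq_sum_min hp2 (m := p - 1 - v) (by omega)
      (by omega), sum_range_succ, Nat.add_sub_cancel_left]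
    omega

end Chacon
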